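/- Let (Ω, 𝓕, P) be a probability space, 𝔽 = (𝓕_t)_{t≥0} a filtration, and Z a random variable (with values in some measurable space) that is independent of 𝓕_∞ := ⋁_{t≥0} 𝓕_t. Let 𝔾 be the right-continuous regularization of the filtration (𝓕_t ∨ σ(Z))_{t≥0}. Then every 𝔽-martingale with right-continuous sample paths is a 𝔾-martingale (i.e. 𝔽 is immersed in 𝔾). -/

import Mathlib

/-!
Since `Z` is independent of `F_∞`, which contains `F_u` and `σ(M_t)`, adjoining `σ(Z)` to `F_u`
does not change the conditional expectation of `M_t`: a π-λ argument on the rectangles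
`B ∩ C`, `B ∈ F_u`, `C ∈ σ(Z)`, where both sides factor by independence. So for
`A ∈ G_s = ⋂_{u > s} (F_u ∨ σ(Z))` and `s < u ≤ t` we get `∫_A M_t = ∫_A M_u`. Letting `u ↓ s`,
`M_u → M_s` pointwise by right-continuity of the paths and the family `M_u = E[M_t | F_u]` is
uniformly integrable, so by Vitali `∫_A M_u → ∫_A M_s`.
-/

open MeasureTheory ProbabilityTheory Filter Set
open scoped ENNReal Topology

noncomputable section

namespace InvMarkovJump

variable {Ω : Type*}

/-- `F` is a filtration (for times `t ≥ 0`) of sub-σ-algebras of `m0`. -/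
def IsFiltration (m0 : MeasurableSpace Ω) (F : ℝ → MeasurableSpace Ω) : Prop :=
  (∀ s t : ℝ, 0 ≤ s → s ≤ t → F s ≤ F t) ∧ ∀ t : ℝ, F t ≤ m0

/-- The right-continuous regularization `(⋂_{s > t} F s)_{t ≥ 0}` of a filtration. -/
def rcReg (F : ℝ → MeasurableSpace Ω) : ℝ → MeasurableSpace Ω :=
  fun t => ⨅ s ∈ Set.Ioi t, F s

/-- All sample paths of `M` are right-continuous (at every time `t ≥ 0`). -/
def RCPaths (M : ℝ → Ω → ℝ) : Prop :=
  ∀ ω, ∀ t : ℝ, 0 ≤ t → ContinuousWithinAt (fun s => M s ω) (Set.Ici t) t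

/-- `M` is a martingale (for times `t ≥ 0`) with respect to the filtration `F`
under the measure `μ`: it is adapted, integrable, and `E[M_t | F_s] = M_s` a.s.
for all `0 ≤ s ≤ t`. -/
def IsMartingale {m0 : MeasurableSpace Ω} (μ : Measure Ω)
    (F : ℝ → MeasurableSpace Ω) (M : ℝ → Ω → ℝ) : Prop :=
  (∀ t : ℝ, 0 ≤ t → Integrable (M t) μ) ∧
  (∀ t : ℝ, 0 ≤ t → Measurable[F t] (M t)) ∧
  ∀ s t : ℝ, 0 ≤ s → s ≤ t → μ[M t|F s] =ᵐ[μ] M s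

/-- `F` is immersed in `G`: `F ⊆ G` and every `F`-martingale (with right-continuous
sample paths) is a `G`-martingale. -/
def Immersed {m0 : MeasurableSpace Ω} (μ : Measure Ω)
    (F G : ℝ → MeasurableSpace Ω) : Prop :=
  (∀ t : ℝ, 0 ≤ t → F t ≤ G t) ∧
  ∀ M : ℝ → Ω → ℝ, RCPaths M → IsMartingale μ F M → IsMartingale μ G M

/-- The usual conditions: the filtration is right-continuous and `F 0` contains
all `μ`-null sets. -/
def UsualConditions {m0 : MeasurableSpace Ω} (μ : Measure Ω)
    (F : ℝ → MeasurableSpace Ω) : Prop :=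
  IsFiltration m0 F ∧ (∀ t : ℝ, 0 ≤ t → F t = rcReg F t) ∧
    ∀ s : Set Ω, μ s = 0 → MeasurableSet[F 0] s

/-- `E` is `Exp(1)`-distributed: `P(E > x) = e^{-x}` for all `x ≥ 0`. -/
def IsExpOne {m0 : MeasurableSpace Ω} (μ : Measure Ω) (E : Ω → ℝ) : Prop :=
  Measurable E ∧ ∀ x : ℝ, 0 ≤ x → μ {ω | x < E ω} = ENNReal.ofReal (Real.exp (-x))

/-- `F_∞ = ⋁_{t ≥ 0} F t`. -/
def Finfty (F : ℝ → MeasurableSpace Ω) : MeasurableSpace Ω :=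
  ⨆ t ∈ Set.Ici (0:ℝ), F t

/-- The natural filtration `(σ(Y_s : 0 ≤ s ≤ t))_{t ≥ 0}` of a process `Y`. -/
def natFilt {β : Type*} [MeasurableSpace β] (Y : ℝ → Ω → β) : ℝ → MeasurableSpace Ω :=
  fun t => ⨆ s ∈ Set.Icc (0:ℝ) t, MeasurableSpace.comap (Y s) inferInstance

/-- Progressive measurability of a process `u` with respect to the filtration `F`:
for every `t ≥ 0`, `(s, ω) ↦ u s ω` on `[0, t] × Ω` is `B([0,t]) ⊗ F t`-measurable. -/
def ProgMeas (F : ℝ → MeasurableSpace Ω) (u : ℝ → Ω → ℝ) : Prop :=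
  ∀ t : ℝ, 0 ≤ t →
    Measurable[MeasurableSpace.prod inferInstance (F t)]
      (fun p : Set.Icc (0:ℝ) t × Ω => u p.1 p.2)

section Independence

variable {m₁ m₁' m₂ m0 : MeasurableSpace Ω} {μ : Measure Ω}
  {E : Type*} [NormedAddCommGroup E] [NormedSpace ℝ E] [CompleteSpace E]

lemma setIntegral_inter_eq_smul_of_indep [IsFiniteMeasure μ] (hm₁ : m₁ ≤ m0) (hm₂ : m₂ ≤ m0)
    (hindep : Indep m₁ m₂ μ) {f : Ω → E} (hf : StronglyMeasurable[m₁] f) (hfi : Integrable f μ)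
    {B C : Set Ω} (hB : MeasurableSet[m₁] B) (hC : MeasurableSet[m₂] C) :
    ∫ x in B ∩ C, f x ∂μ = μ.real C • ∫ x in B, f x ∂μ := by
  calc ∫ x in B ∩ C, f x ∂μ = ∫ x in C, B.indicator f x ∂μ := by
        rw [setIntegral_indicator (hm₁ _ hB), inter_comm]
    _ = ∫ x in C, μ[B.indicator f | m₂] x ∂μ :=
        (setIntegral_condExp hm₂ (hfi.indicator (hm₁ _ hB)) hC).symm
    _ = ∫ _ in C, μ[B.indicator f] ∂μ :=
        setIntegral_congr_ae (hm₂ _ hC) <| (condExp_indep_eq hm₁ hm₂ (hf.indicator hB)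
          hindep).mono fun _ hx _ => hx
    _ = μ.real C • ∫ x in B, f x ∂μ := by
        rw [setIntegral_const, integral_indicator (hm₁ _ hB)]

lemma isPiSystem_inter_measurableSet :
    IsPiSystem {A | ∃ B C, MeasurableSet[m₁] B ∧ MeasurableSet[m₂] C ∧ A = B ∩ C} := by
  rintro _ ⟨B, C, hB, hC, rfl⟩ _ ⟨B', C', hB', hC', rfl⟩ _
  exact ⟨B ∩ B', C ∩ C', hB.inter hB', hC.inter hC', inter_inter_inter_comm B C B' C'⟩

lemma sup_eq_generateFrom_inter :
    m₁ ⊔ m₂ = MeasurableSpace.generateFrom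
      {A | ∃ B C, MeasurableSet[m₁] B ∧ MeasurableSet[m₂] C ∧ A = B ∩ C} := by
  refine le_antisymm (sup_le ?_ ?_) (MeasurableSpace.generateFrom_le ?_)
  · exact fun B hB => .basic _ ⟨B, univ, hB, .univ, (inter_univ B).symm⟩
  · exact fun C hC => .basic _ ⟨univ, C, .univ, hC, (univ_inter C).symm⟩
  · rintro _ ⟨B, C, hB, hC, rfl⟩
    exact (le_sup_left (b := m₂) _ hB).inter (le_sup_right (a := m₁) _ hC)

lemma setIntegral_eq_of_indep_sup [IsFiniteMeasure μ] (h₁ : m₁ ≤ m₁') (hm₁' : m₁' ≤ m0)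
    (hm₂ : m₂ ≤ m0) (hindep : Indep m₁' m₂ μ) {f g : Ω → E}
    (hf : StronglyMeasurable[m₁'] f) (hfi : Integrable f μ)
    (hg : StronglyMeasurable[m₁'] g) (hgi : Integrable g μ)
    (heq : ∀ B, MeasurableSet[m₁] B → ∫ x in B, f x ∂μ = ∫ x in B, g x ∂μ)
    {A : Set Ω} (hA : MeasurableSet[m₁ ⊔ m₂] A) :
    ∫ x in A, f x ∂μ = ∫ x in A, g x ∂μ := by
  have hsup : m₁ ⊔ m₂ ≤ m0 := sup_le (h₁.trans hm₁') hm₂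
  induction A, hA using MeasurableSpace.induction_on_inter sup_eq_generateFrom_inter
    isPiSystem_inter_measurableSet with
  | empty => simp
  | basic _ hA =>
    obtain ⟨B, C, hB, hC, rfl⟩ := hA
    rw [setIntegral_inter_eq_smul_of_indep hm₁' hm₂ hindep hf hfi (h₁ _ hB) hC,
      setIntegral_inter_eq_smul_of_indep hm₁' hm₂ hindep hg hgi (h₁ _ hB) hC, heq B hB]
  | compl A hA ih =>
    have huniv := heq univ .univ
    rw [setIntegral_univ, setIntegral_univ] at huniv
    rw [setIntegral_compl (hsup _ hA) hfi, setIntegral_compl (hsup _ hA) hgi, huniv, ih]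
  | iUnion A hdisj hA ih =>
    rw [integral_iUnion (fun i => hsup _ (hA i)) hdisj hfi.integrableOn,
      integral_iUnion (fun i => hsup _ (hA i)) hdisj hgi.integrableOn]
    exact tsum_congr ih

lemma condExp_sup_ae_eq_of_indep [IsFiniteMeasure μ] (h₁ : m₁ ≤ m₁') (hm₁' : m₁' ≤ m0)
    (hm₂ : m₂ ≤ m0) (hindep : Indep m₁' m₂ μ) {f : Ω → E} (hf : StronglyMeasurable[m₁'] f) :
    μ[f | m₁ ⊔ m₂] =ᵐ[μ] μ[f | m₁] := by
  by_cases hfi : Integrable f μ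
  swap; · rw [condExp_of_not_integrable hfi, condExp_of_not_integrable hfi]
  have hmeas : StronglyMeasurable[m₁ ⊔ m₂] (μ[f | m₁]) :=
    stronglyMeasurable_condExp.mono le_sup_left
  refine (ae_eq_condExp_of_forall_setIntegral_eq (sup_le (h₁.trans hm₁') hm₂) hfi
    (fun _ _ _ => integrable_condExp.integrableOn) (fun A hA _ => ?_)
    hmeas.aestronglyMeasurable).symm
  exact setIntegral_eq_of_indep_sup h₁ hm₁' hm₂ hindep (stronglyMeasurable_condExp.mono h₁)
    integrable_condExp hf hfi (fun B hB => setIntegral_condExp (h₁.trans hm₁') hfi hB) hA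

end Independence

lemma le_Finfty (F : ℝ → MeasurableSpace Ω) {t : ℝ} (ht : 0 ≤ t) : F t ≤ Finfty F :=
  le_biSup F ht

lemma Finfty_le {m0 : MeasurableSpace Ω} {F : ℝ → MeasurableSpace Ω} (hF : ∀ t, F t ≤ m0) :
    Finfty F ≤ m0 :=
  iSup₂_le fun t _ => hF t

lemma rcReg_le_of_lt (G : ℝ → MeasurableSpace Ω) {s u : ℝ} (h : s < u) : rcReg G s ≤ G u :=
  iInf₂_le u h

lemma rcReg_le {m0 : MeasurableSpace Ω} {G : ℝ → MeasurableSpace Ω} (hG : ∀ t, G t ≤ m0)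
    (s : ℝ) : rcReg G s ≤ m0 :=
  (rcReg_le_of_lt G (lt_add_one s)).trans (hG _)

lemma le_rcReg_sup {F : ℝ → MeasurableSpace Ω} (hF : ∀ s t : ℝ, 0 ≤ s → s ≤ t → F s ≤ F t)
    (m₂ : MeasurableSpace Ω) {t : ℝ} (ht : 0 ≤ t) : F t ≤ rcReg (fun t => F t ⊔ m₂) t :=
  le_iInf₂ fun u hu => (hF t u ht (le_of_lt hu)).trans le_sup_left

namespace IsMartingale

variable {m₂ m0 : MeasurableSpace Ω} {μ : Measure Ω} [IsFiniteMeasure μ]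
  {F : ℝ → MeasurableSpace Ω} {M : ℝ → Ω → ℝ}

lemma condExp_sup_of_indep (hM : IsMartingale μ F M) (hF : ∀ t, F t ≤ m0) (hm₂ : m₂ ≤ m0)
    (hindep : Indep (Finfty F) m₂ μ) {u t : ℝ} (hu : 0 ≤ u) (hut : u ≤ t) :
    μ[M t | F u ⊔ m₂] =ᵐ[μ] M u :=
  have ht : 0 ≤ t := hu.trans hut
  (condExp_sup_ae_eq_of_indep (le_Finfty F hu) (Finfty_le hF) hm₂ hindep
    ((hM.2.1 t ht).mono (le_Finfty F ht) le_rfl).stronglyMeasurable).trans (hM.2.2 u t hu hut)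

lemma tendsto_setIntegral_of_tendsto_right (hM : IsMartingale μ F M) (hRC : RCPaths M)
    (hF : ∀ t, F t ≤ m0) {s t : ℝ} (hs : 0 ≤ s) {u : ℕ → ℝ} (hsu : ∀ n, s ≤ u n)
    (hut : ∀ n, u n ≤ t) (hu : Tendsto u atTop (𝓝 s)) (A : Set Ω) :
    Tendsto (fun n => ∫ x in A, M (u n) x ∂μ) atTop (𝓝 (∫ x in A, M s x ∂μ)) := by
  have hu0 n : 0 ≤ u n := hs.trans (hsu n)
  have ht : 0 ≤ t := (hu0 0).trans (hut 0)
  have hui : UnifIntegrable (fun n => M (u n)) 1 μ :=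
    (unifIntegrable_congr_ae fun n => hM.2.2 (u n) t (hu0 n) (hut n)).1
      ((hM.1 t ht).uniformIntegrable_condExp fun n => hF (u n)).2.1
  have hae : ∀ᵐ ω ∂μ, Tendsto (fun n => M (u n) ω) atTop (𝓝 (M s ω)) :=
    .of_forall fun ω => (hRC ω s hs).tendsto.comp
      (tendsto_nhdsWithin_iff.2 ⟨hu, .of_forall hsu⟩)
  have hL1 := tendsto_Lp_finite_of_tendsto_ae le_rfl ENNReal.one_ne_top
    (fun n => (hM.1 (u n) (hu0 n)).aestronglyMeasurable)
    (memLp_one_iff_integrable.2 (hM.1 s hs)) hui hae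
  exact tendsto_setIntegral_of_L1' (M s) (hM.1 s hs).1 (.of_forall fun n => hM.1 (u n) (hu0 n))
    hL1 A

lemma setIntegral_rcReg_sup_eq (hM : IsMartingale μ F M) (hRC : RCPaths M)
    (hF : ∀ t, F t ≤ m0) (hm₂ : m₂ ≤ m0) (hindep : Indep (Finfty F) m₂ μ) {s t : ℝ}
    (hs : 0 ≤ s) (hst : s ≤ t) {A : Set Ω} (hA : MeasurableSet[rcReg (fun t => F t ⊔ m₂) s] A) :
    ∫ x in A, M s x ∂μ = ∫ x in A, M t x ∂μ := by
  rcases hst.eq_or_lt with rfl | hlt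
  · rfl
  obtain ⟨u, -, hu_mem, hu⟩ := exists_seq_strictAnti_tendsto' hlt
  have hsup n : F (u n) ⊔ m₂ ≤ m0 := sup_le (hF _) hm₂
  have hconst n : ∫ x in A, M (u n) x ∂μ = ∫ x in A, M t x ∂μ := by
    have hAn : MeasurableSet[F (u n) ⊔ m₂] A := rcReg_le_of_lt _ (hu_mem n).1 A hA
    rw [← setIntegral_condExp (hsup n) (hM.1 t (hs.trans hst)) hAn]
    refine setIntegral_congr_ae (hsup n A hAn) ?_
    filter_upwards [hM.condExp_sup_of_indep hF hm₂ hindep (hs.trans (hu_mem n).1.le)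
      (hu_mem n).2.le] with x hx _ using hx.symm
  have hlim := hM.tendsto_setIntegral_of_tendsto_right hRC hF hs (fun n => (hu_mem n).1.le)
    (fun n => (hu_mem n).2.le) hu A
  simp only [hconst] at hlim
  exact tendsto_nhds_unique hlim tendsto_const_nhds

lemma rcReg_sup_of_indep (hM : IsMartingale μ F M) (hRC : RCPaths M)
    (hF : IsFiltration m0 F) (hm₂ : m₂ ≤ m0) (hindep : Indep (Finfty F) m₂ μ) :
    IsMartingale μ (rcReg fun t => F t ⊔ m₂) M := by
  refine ⟨hM.1, fun t ht => (hM.2.1 t ht).mono (le_rcReg_sup hF.1 m₂ ht) le_rfl,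
    fun s t hs hst => ?_⟩
  have hMs : Measurable[rcReg (fun t => F t ⊔ m₂) s] (M s) :=
    (hM.2.1 s hs).mono (le_rcReg_sup hF.1 m₂ hs) le_rfl
  exact (ae_eq_condExp_of_forall_setIntegral_eq (rcReg_le (fun t => sup_le (hF.2 t) hm₂) s)
    (hM.1 t (hs.trans hst)) (fun _ _ _ => (hM.1 s hs).integrableOn)
    (fun A hA _ => hM.setIntegral_rcReg_sup_eq hRC hF.2 hm₂ hindep hs hst hA)
    hMs.stronglyMeasurable.aestronglyMeasurable).symm

end IsMartingale

/-- If `Z` is independent of `F_∞`, then `F` is immersed in the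
right-continuous regularization of `(F t ∨ σ(Z))_t`. -/
theorem immersed_indep_enlargement {β : Type*} [MeasurableSpace β]
    {m0 : MeasurableSpace Ω} (μ : Measure Ω) [IsProbabilityMeasure μ]
    (F : ℝ → MeasurableSpace Ω) (hF : IsFiltration m0 F)
    (Z : Ω → β) (hZ : Measurable Z)
    (hindep : Indep (Finfty F) (MeasurableSpace.comap Z inferInstance) μ) :
    Immersed μ F (rcReg fun t => F t ⊔ MeasurableSpace.comap Z inferInstance) :=
  ⟨fun _ ht => le_rcReg_sup hF.1 _ ht,
    fun _ hRC hM => hM.rcReg_sup_of_indep hRC hF hZ.comap_le hindep⟩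

end InvMarkovJump
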